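/- Every connected component of the solution graph of a Horn formula contains a unique locally minimal solution, and this solution is the coordinate-wise minimum of the component. -/

import Mathlib

def SatClause {n : ℕ} (a : Fin n → Bool) (c : List (Fin n × Bool)) : Prop :=
  ∃ l ∈ c, (if l.2 then a l.1 else !(a l.1)) = true

def IsHornClause {n : ℕ} (c : List (Fin n × Bool)) : Prop :=
  (c.filter (fun l => l.2)).length ≤ 1

def Reach {ι : Type*} [Fintype ι] (S : Set (ι → Bool)) : (ι → Bool) → (ι → Bool) → Prop :=
  Relation.ReflTransGen (fun u v => u ∈ S ∧ v ∈ S ∧ hammingDist u v = 1)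

/-- `a` is locally minimal in `S`: flipping any 1-coordinate to 0 leaves `S`. -/
def LocallyMinimal {n : ℕ} (S : Set (Fin n → Bool)) (a : Fin n → Bool) : Prop :=
  ∀ i : Fin n, a i = true → Function.update a i false ∉ S

/-!
The solutions of a Horn formula are closed under coordinatewise `∧`, i.e. form an inf-closed
subset of the lattice `Fin n → Bool`. Meeting a path of solutions with a fixed solution `u`
gives a walk (possibly with repeated vertices) from `u`, so every component is itself
inf-closed; being finite and nonempty, it contains its infimum `m`, which is then the minimum of
the component and in particular locally minimal. Conversely, meeting a path from a locally
minimal `m'` with `m'` itself can never take a step, so `m'` lies below its whole component and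
hence equals `m`.
-/

open Function

theorem List.eq_of_mem_of_length_le_one {α : Type*} {L : List α} {x y : α}
    (hx : x ∈ L) (hy : y ∈ L) (hL : L.length ≤ 1) : x = y := by
  rcases L with _ | ⟨z, _ | ⟨w, L⟩⟩ <;> simp_all

theorem SatClause.inf {n : ℕ} {c : List (Fin n × Bool)} (hc : IsHornClause c)
    {a b : Fin n → Bool} (ha : SatClause a c) (hb : SatClause b c) : SatClause (a ⊓ b) c := by
  obtain ⟨l, hl, hal⟩ := ha
  obtain ⟨k, hk, hbk⟩ := hb
  cases hls : l.2
  · exact ⟨l, hl, by simp_all⟩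
  cases hks : k.2
  · exact ⟨k, hk, by simp_all⟩
  have hlk : l = k := List.eq_of_mem_of_length_le_one
    (List.mem_filter.2 ⟨hl, hls⟩) (List.mem_filter.2 ⟨hk, hks⟩) hc
  subst hlk
  exact ⟨l, hl, by simp_all⟩

theorem infClosed_setOf_forall_satClause {n : ℕ} {φ : List (List (Fin n × Bool))}
    (hφ : ∀ c ∈ φ, IsHornClause c) : InfClosed {x | ∀ c ∈ φ, SatClause x c} :=
  fun _ ha _ hb c hc => (ha c hc).inf (hφ c hc) (hb c hc)

section Hamming

variable {ι : Type*} [Fintype ι] {β : ι → Type*} [∀ i, DecidableEq (β i)]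

theorem hammingDist_inf_inf_le [∀ i, SemilatticeInf (β i)] (u v w : ∀ i, β i) :
    hammingDist (u ⊓ v) (u ⊓ w) ≤ hammingDist v w :=
  hammingDist_comp_le_hammingDist (fun i => (u i ⊓ ·))

theorem hammingDist_update_self [DecidableEq ι] {x : ∀ i, β i} {i : ι} {b : β i}
    (h : x i ≠ b) : hammingDist x (update x i b) = 1 := by
  rw [hammingDist, Finset.card_eq_one]
  refine ⟨i, Finset.ext fun j => ?_⟩
  by_cases hj : j = i
  · subst hj; simpa using h
  · simp [hj]

theorem eq_update_of_hammingDist_le_one [DecidableEq ι] {x y : ∀ i, β i} {i : ι}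
    (hxy : hammingDist x y ≤ 1) (hi : x i ≠ y i) : y = update x i (y i) := by
  funext j
  by_cases hj : j = i
  · subst hj; simp
  · rw [update_of_ne hj]
    by_contra hne
    have : 1 < hammingDist x y :=
      Finset.one_lt_card.2 ⟨i, by simpa using hi, j, by simpa [eq_comm] using hne, Ne.symm hj⟩
    omega

end Hamming

section Reach

variable {ι : Type*} [Fintype ι] {S : Set (ι → Bool)} {x y : ι → Bool}

theorem Reach.symm (h : Reach S x y) : Reach S y x := by
  induction h with
  | refl => exact .refl
  | @tail v w _ step ih =>
    exact .head ⟨step.2.1, step.1, (hammingDist_comm w v).trans step.2.2⟩ ih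

theorem Reach.mem (hx : x ∈ S) (h : Reach S x y) : y ∈ S := by
  induction h with
  | refl => exact hx
  | tail _ step => exact step.2.1

theorem reach_of_hammingDist_le_one (hx : x ∈ S) (hy : y ∈ S) (h : hammingDist x y ≤ 1) :
    Reach S x y := by
  rcases Nat.le_one_iff_eq_zero_or_eq_one.1 h with h | h
  · rw [hammingDist_eq_zero.1 h]
    exact .refl
  · exact .single ⟨hx, hy, h⟩

theorem Reach.inf_right (hS : InfClosed S) (hx : x ∈ S) (h : Reach S x y) :
    Reach S x (x ⊓ y) := by
  induction h with
  | refl => rw [inf_idem]; exact .refl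
  | @tail v w _ step ih =>
    refine ih.trans (reach_of_hammingDist_le_one (hS hx step.1) (hS hx step.2.1) ?_)
    exact (hammingDist_inf_inf_le x v w).trans step.2.2.le

theorem infClosed_setOf_reach (hS : InfClosed S) {a : ι → Bool} (ha : a ∈ S) :
    InfClosed {x | Reach S a x} := by
  intro x (hx : Reach S a x) y (hy : Reach S a y)
  exact Relation.ReflTransGen.trans hx (Reach.inf_right hS (hx.mem ha) (hx.symm.trans hy))

end Reach

section LocallyMinimal

variable {n : ℕ} {S : Set (Fin n → Bool)} {m : Fin n → Bool}

theorem locallyMinimal_of_forall_reach_le (hm : m ∈ S) (hle : ∀ b, Reach S m b → m ≤ b) :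
    LocallyMinimal S m := by
  intro i hmi hupd
  have hdist : hammingDist m (update m i false) = 1 := hammingDist_update_self (by simp [hmi])
  have := hle _ (.single ⟨hm, hupd, hdist⟩) i
  simp only [hmi, update_self] at this
  exact Bool.false_lt_true.not_ge this

theorem LocallyMinimal.le_of_reach (hS : InfClosed S) (hm : m ∈ S) (hmin : LocallyMinimal S m)
    {y : Fin n → Bool} (h : Reach S m y) : m ≤ y := by
  induction h with
  | refl => exact le_rfl
  | @tail v w _ step ih =>
    by_contra hmw
    obtain ⟨i, hmi, hwi⟩ : ∃ i, m i = true ∧ w i = false := by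
      simpa [Pi.le_def, Bool.le_iff_imp] using hmw
    have hdist : hammingDist m (m ⊓ w) ≤ 1 := by
      simpa [inf_eq_left.2 ih] using (hammingDist_inf_inf_le m v w).trans step.2.2.le
    have hne : m i ≠ (m ⊓ w) i := by simp [hmi, hwi]
    have hupd : m ⊓ w = update m i false := by
      rw [eq_update_of_hammingDist_le_one hdist hne]; simp [hwi]
    exact hmin i hmi (hupd ▸ hS hm step.2.1)

end LocallyMinimal

theorem horn_component_unique_locally_minimal (n : ℕ)
    (φ : List (List (Fin n × Bool)))
    (hHorn : ∀ c ∈ φ, IsHornClause c)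
    (a : Fin n → Bool) (ha : a ∈ {x | ∀ c ∈ φ, SatClause x c}) :
    let S : Set (Fin n → Bool) := {x | ∀ c ∈ φ, SatClause x c}
    ∃ m ∈ S, Reach S a m ∧ LocallyMinimal S m ∧
      (∀ b ∈ S, Reach S a b → m ≤ b) ∧
      (∀ m' ∈ S, Reach S a m' → LocallyMinimal S m' → m' = m) := by
  intro S
  have hS : InfClosed S := infClosed_setOf_forall_satClause hHorn
  set C : Set (Fin n → Bool) := {x | Reach S a x}
  have hmC : sInf C ∈ C := (infClosed_setOf_reach hS ha).sInf_mem_of_nonempty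
    C.toFinite ⟨a, Relation.ReflTransGen.refl⟩ subset_rfl
  have hmS : sInf C ∈ S := Reach.mem ha hmC
  have hle : ∀ b, Reach S a b → sInf C ≤ b := fun b hb => sInf_le hb
  refine ⟨sInf C, hmS, hmC, ?_, fun b _ hb => hle b hb, ?_⟩
  · exact locallyMinimal_of_forall_reach_le hmS
      fun b hb => hle b (Relation.ReflTransGen.trans hmC hb)
  · intro m' hm' ham' hmin'
    exact le_antisymm (hmin'.le_of_reach hS hm' (ham'.symm.trans hmC)) (hle m' ham')
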